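/- arXiv:1412.4255 — 4 statements merged into one kernel-verified Lean document; each statement's English description precedes it below -/
import Mathlib

section
/- If E is an sc-Banach space (a nested sequence of Banach spaces E_0 ⊇ E_1 ⊇ ... with compact inclusions E_{i+1} → E_i and E_∞ = ∩ E_i dense in every E_m), then a finite-dimensional linear subspace F ⊆ E_0 admits an sc-complement (an sc-subspace G with F ⊕ G_i = E_i topologically for all i) if and only if F ⊆ E_∞. -/
/-- An sc-structure on a Banach space `E`: a nested sequence of Banach spaces
`E = E₀ ⊇ E₁ ⊇ E₂ ⊇ ⋯`, each level `Eᵢ = level i` carrying its own complete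
norm `lnorm i`, such that the inclusion `E_{i+1} → E_i` is a compact operator
and `E_∞ = ⋂ᵢ Eᵢ` is dense in every level. -/
structure ScBanach (E : Type*) [NormedAddCommGroup E] [NormedSpace ℝ E] where
  level : ℕ → Submodule ℝ E
  level_zero : level 0 = ⊤
  level_antitone : ∀ i, level (i + 1) ≤ level i
  lnorm : ℕ → E → ℝ
  lnorm_zero_eq : ∀ x, lnorm 0 x = ‖x‖
  lnorm_nonneg : ∀ i x, 0 ≤ lnorm i x
  lnorm_eq_zero : ∀ i, ∀ x ∈ level i, (lnorm i x = 0 ↔ x = 0)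
  lnorm_add : ∀ i, ∀ x ∈ level i, ∀ y ∈ level i,
      lnorm i (x + y) ≤ lnorm i x + lnorm i y
  lnorm_smul : ∀ i (c : ℝ) (x : E), lnorm i (c • x) = |c| * lnorm i x
  /-- the inclusion of level `i+1` into level `i` is a bounded operator -/
  incl_bounded : ∀ i, ∃ C > 0, ∀ x ∈ level (i + 1), lnorm i x ≤ C * lnorm (i + 1) x
  /-- compactness of the inclusion `E_{i+1} → E_i` -/
  incl_compact : ∀ i (u : ℕ → E), (∀ n, u n ∈ level (i + 1)) →
      (∃ C, ∀ n, lnorm (i + 1) (u n) ≤ C) →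
      ∃ φ : ℕ → ℕ, StrictMono φ ∧
        ∀ ε > 0, ∃ N, ∀ p ≥ N, ∀ q ≥ N, lnorm i (u (φ p) - u (φ q)) < ε
  /-- each level is a Banach space -/
  level_complete : ∀ i (u : ℕ → E), (∀ n, u n ∈ level i) →
      (∀ ε > 0, ∃ N, ∀ p ≥ N, ∀ q ≥ N, lnorm i (u p - u q) < ε) →
      ∃ x ∈ level i, ∀ ε > 0, ∃ N, ∀ n ≥ N, lnorm i (u n - x) < ε
  /-- `E_∞ = ⋂ᵢ Eᵢ` is dense in every level -/
  smooth_dense : ∀ m, ∀ x ∈ level m, ∀ ε > 0,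
      ∃ y ∈ ⨅ i, level i, lnorm m (x - y) < ε

namespace ScBanach

variable {E : Type*} [NormedAddCommGroup E] [NormedSpace ℝ E]

/-- The smooth points `E_∞ = ⋂ᵢ Eᵢ`. -/
def smoothPoints (S : ScBanach E) : Submodule ℝ E := ⨅ i, S.level i

/-- `F` is an sc-subspace: the induced filtration `Fᵢ = F ∩ Eᵢ` again satisfies
the sc-axioms of completeness on every level and density of the smooth points. -/
def IsScSubspace (S : ScBanach E) (F : Submodule ℝ E) : Prop :=
  (∀ i (u : ℕ → E), (∀ n, u n ∈ F ⊓ S.level i) →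
      (∀ ε > 0, ∃ N, ∀ p ≥ N, ∀ q ≥ N, S.lnorm i (u p - u q) < ε) →
      ∃ x ∈ F ⊓ S.level i, ∀ ε > 0, ∃ N, ∀ n ≥ N, S.lnorm i (u n - x) < ε) ∧
  (∀ m, ∀ x ∈ F ⊓ S.level m, ∀ ε > 0,
      ∃ y ∈ F ⊓ S.smoothPoints, S.lnorm m (x - y) < ε)

/-- `F` has an sc-complement: there is an sc-subspace `G` such that on every
level `Fᵢ ⊕ Gᵢ = Eᵢ` as a topological direct sum. -/
def HasScComplement (S : ScBanach E) (F : Submodule ℝ E) : Prop :=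
  ∃ G : Submodule ℝ E, S.IsScSubspace G ∧ F ⊓ G = ⊥ ∧
    (∀ i, (F ⊓ S.level i) ⊔ (G ⊓ S.level i) = S.level i) ∧
    -- topological direct sum: the projection onto `Fᵢ` along `Gᵢ` is bounded
    ∀ i, ∃ C > 0, ∀ x ∈ F ⊓ S.level i, ∀ y ∈ G ⊓ S.level i,
      S.lnorm i x ≤ C * S.lnorm i (x + y)

end ScBanach

/-!
If `F ⊆ E_∞`, take a continuous projection `P` of `E` onto the finite-dimensional `F` and let
`G = ker P`. Since convergence in a level implies convergence in `E`, the closed subspace `G`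
inherits completeness of every level; `y ↦ y - P y` maps smooth points to smooth points of `G`,
which gives density; and `P` is bounded on each level because on `F ⊆ Eᵢ` the `i`-th norm is
dominated by the norm of `E`.

Conversely, the splittings `Eᵢ = Fᵢ ⊕ Gᵢ` are restrictions of one another, so the `F`-component
of a smooth point is smooth. Density of `E_∞` in `E₀` and boundedness of the level-`0`
projection then make `F ∩ E_∞` dense in `F`; being finite-dimensional it is closed.
-/

namespace ScBanach

variable {E : Type*} [NormedAddCommGroup E] [NormedSpace ℝ E] (S : ScBanach E)

lemma lnorm_zero (i : ℕ) : S.lnorm i 0 = 0 := by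
  simpa using S.lnorm_smul i 0 0

lemma lnorm_neg (i : ℕ) (x : E) : S.lnorm i (-x) = S.lnorm i x := by
  simpa using S.lnorm_smul i (-1) x

lemma smoothPoints_le_level (i : ℕ) : S.smoothPoints ≤ S.level i :=
  iInf_le _ i

lemma mem_level_zero (x : E) : x ∈ S.level 0 := by
  simp [S.level_zero]

lemma lnorm_sum_le (i : ℕ) {ι : Type*} (s : Finset ι) (g : ι → E)
    (hg : ∀ j ∈ s, g j ∈ S.level i) :
    S.lnorm i (∑ j ∈ s, g j) ≤ ∑ j ∈ s, S.lnorm i (g j) := by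
  induction s using Finset.cons_induction with
  | empty => simp [S.lnorm_zero]
  | cons a t ha ih =>
    rw [Finset.sum_cons, Finset.sum_cons]
    have hrest : ∀ j ∈ t, g j ∈ S.level i := fun j hj => hg j (Finset.mem_cons_of_mem hj)
    calc S.lnorm i (g a + ∑ j ∈ t, g j)
        ≤ S.lnorm i (g a) + S.lnorm i (∑ j ∈ t, g j) :=
          S.lnorm_add i _ (hg a (Finset.mem_cons_self a t)) _ (Submodule.sum_mem _ hrest)
      _ ≤ S.lnorm i (g a) + ∑ j ∈ t, S.lnorm i (g j) := by gcongr; exact ih hrest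

lemma exists_norm_le_mul_lnorm (i : ℕ) :
    ∃ D > 0, ∀ x ∈ S.level i, ‖x‖ ≤ D * S.lnorm i x := by
  induction i with
  | zero => exact ⟨1, one_pos, fun x _ => by simp [S.lnorm_zero_eq]⟩
  | succ i ih =>
    obtain ⟨D, hD, hDle⟩ := ih
    obtain ⟨C, hC, hCle⟩ := S.incl_bounded i
    refine ⟨D * C, by positivity, fun x hx => ?_⟩
    calc ‖x‖ ≤ D * S.lnorm i x := hDle x (S.level_antitone i hx)
      _ ≤ D * (C * S.lnorm (i + 1) x) := by gcongr; exact hCle x hx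
      _ = D * C * S.lnorm (i + 1) x := by ring

lemma tendsto_of_lnorm_sub {i : ℕ} {u : ℕ → E} {x : E} (hu : ∀ n, u n ∈ S.level i)
    (hx : x ∈ S.level i) (hlim : ∀ ε > 0, ∃ N, ∀ n ≥ N, S.lnorm i (u n - x) < ε) :
    Filter.Tendsto u Filter.atTop (nhds x) := by
  obtain ⟨D, hD, hDle⟩ := S.exists_norm_le_mul_lnorm i
  rw [Metric.tendsto_atTop]
  intro ε hε
  obtain ⟨N, hN⟩ := hlim (ε / D) (by positivity)
  refine ⟨N, fun n hn => ?_⟩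
  calc dist (u n) x = ‖u n - x‖ := dist_eq_norm _ _
    _ ≤ D * S.lnorm i (u n - x) := hDle _ (Submodule.sub_mem _ (hu n) hx)
    _ < D * (ε / D) := by gcongr; exact hN n hn
    _ = ε := by field_simp

lemma isScSubspace_of_isClosed {G : Submodule ℝ E} (hG : IsClosed (G : Set E))
    (hdense : ∀ m, ∀ x ∈ G ⊓ S.level m, ∀ ε > 0,
      ∃ y ∈ G ⊓ S.smoothPoints, S.lnorm m (x - y) < ε) :
    S.IsScSubspace G := by
  refine ⟨fun i u hu hcauchy => ?_, hdense⟩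
  obtain ⟨x, hxi, hlim⟩ := S.level_complete i u (fun n => (hu n).2) hcauchy
  have hxG : x ∈ G :=
    hG.mem_of_tendsto (S.tendsto_of_lnorm_sub (fun n => (hu n).2) hxi hlim)
      (Filter.Eventually.of_forall fun n => (hu n).1)
  exact ⟨x, ⟨hxG, hxi⟩, hlim⟩

lemma exists_lnorm_le_mul_norm_of_finiteDimensional {i : ℕ} (F : Submodule ℝ E)
    [FiniteDimensional ℝ F] (hF : F ≤ S.level i) :
    ∃ K ≥ 0, ∀ y ∈ F, S.lnorm i y ≤ K * ‖y‖ := by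
  let b := Module.finBasis ℝ F
  let c : F →L[ℝ] (Fin (Module.finrank ℝ F) → ℝ) :=
    (b.equivFun.toContinuousLinearEquiv : F →L[ℝ] _)
  refine ⟨‖c‖ * ∑ j, S.lnorm i (b j),
    mul_nonneg c.opNorm_nonneg (Finset.sum_nonneg fun j _ => S.lnorm_nonneg _ _), fun y hy => ?_⟩
  lift y to F using hy
  have hrepr : (y : E) = ∑ j, c y j • ((b j : F) : E) := by
    have h := congrArg Subtype.val (b.sum_repr y)
    rw [Submodule.coe_sum] at h
    simpa [c] using h.symm
  calc S.lnorm i y = S.lnorm i (∑ j, c y j • ((b j : F) : E)) := by rw [← hrepr]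
    _ ≤ ∑ j, S.lnorm i (c y j • ((b j : F) : E)) :=
        S.lnorm_sum_le i _ _ fun j _ => Submodule.smul_mem _ _ (hF (b j).2)
    _ = ∑ j, ‖c y j‖ * S.lnorm i (b j) := by simp [S.lnorm_smul]
    _ ≤ ∑ j, ‖c‖ * ‖y‖ * S.lnorm i (b j) := by
        gcongr with j
        · exact S.lnorm_nonneg _ _
        · exact (norm_le_pi_norm (c y) j).trans (c.le_opNorm y)
    _ = ‖c‖ * (∑ j, S.lnorm i (b j)) * ‖(y : E)‖ := by rw [← Finset.mul_sum]; simp; ring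

lemma exists_lnorm_map_le {i : ℕ} {F : Submodule ℝ E} [FiniteDimensional ℝ F]
    (hF : F ≤ S.level i) (f : E →L[ℝ] F) :
    ∃ K ≥ 0, ∀ x ∈ S.level i, S.lnorm i (f x) ≤ K * S.lnorm i x := by
  obtain ⟨K, hK, hKle⟩ := S.exists_lnorm_le_mul_norm_of_finiteDimensional F hF
  obtain ⟨D, hD, hDle⟩ := S.exists_norm_le_mul_lnorm i
  refine ⟨K * ‖f‖ * D, by positivity, fun x hx => ?_⟩
  calc S.lnorm i (f x) ≤ K * ‖f x‖ := hKle _ (f x).2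
    _ ≤ K * (‖f‖ * (D * S.lnorm i x)) := by
        gcongr
        exact (f.le_opNorm x).trans (by gcongr; exact hDle x hx)
    _ = K * ‖f‖ * D * S.lnorm i x := by ring

lemma mem_smoothPoints_of_add_mem {F G : Submodule ℝ E} (hdisj : F ⊓ G = ⊥)
    (hsup : ∀ i, (F ⊓ S.level i) ⊔ (G ⊓ S.level i) = S.level i)
    {x y : E} (hx : x ∈ F) (hy : y ∈ G) (hxy : x + y ∈ S.smoothPoints) :
    x ∈ S.smoothPoints := by
  refine Submodule.mem_iInf _ |>.mpr fun i => ?_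
  have hxyi : x + y ∈ S.level i := S.smoothPoints_le_level i hxy
  rw [← hsup i, Submodule.mem_sup] at hxyi
  obtain ⟨xi, ⟨hxiF, hxi⟩, yi, ⟨hyiG, -⟩, hsum⟩ := hxyi
  have hdiff : x - xi = 0 :=
    Submodule.disjoint_def'.mp (disjoint_iff.mpr hdisj) _ (F.sub_mem hx hxiF) (yi - y)
      (G.sub_mem hyiG hy) (by rw [sub_eq_sub_iff_add_eq_add, add_comm yi, hsum])
  rwa [sub_eq_zero.mp hdiff]

lemma le_smoothPoints_of_hasScComplement {F : Submodule ℝ E} [FiniteDimensional ℝ F]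
    (h : S.HasScComplement F) : F ≤ S.smoothPoints := by
  obtain ⟨G, -, hdisj, hsup, hbdd⟩ := h
  obtain ⟨C, hC, hCle⟩ := hbdd 0
  have : FiniteDimensional ℝ ↥(F ⊓ S.smoothPoints) :=
    Submodule.finiteDimensional_of_le inf_le_left
  have hclosed : IsClosed ((F ⊓ S.smoothPoints : Submodule ℝ E) : Set E) :=
    Submodule.closed_of_finiteDimensional _
  intro x hx
  suffices x ∈ closure ((F ⊓ S.smoothPoints : Submodule ℝ E) : Set E) from
    (hclosed.closure_subset this).2
  rw [Metric.mem_closure_iff]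
  intro ε hε
  obtain ⟨z, hz, hxz⟩ := S.smooth_dense 0 x (S.mem_level_zero x) (ε / C) (by positivity)
  have hz0 : z ∈ (F ⊓ S.level 0) ⊔ (G ⊓ S.level 0) := by
    rw [hsup 0]; exact S.mem_level_zero z
  obtain ⟨x', ⟨hx'F, -⟩, y', ⟨hy'G, -⟩, rfl⟩ := Submodule.mem_sup.mp hz0
  refine ⟨x', ⟨hx'F, S.mem_smoothPoints_of_add_mem hdisj hsup hx'F hy'G hz⟩, ?_⟩
  have hproj := hCle (x - x') ⟨F.sub_mem hx hx'F, S.mem_level_zero _⟩ (-y')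
    ⟨G.neg_mem hy'G, S.mem_level_zero _⟩
  rw [← sub_eq_add_neg, sub_sub] at hproj
  calc dist x x' = S.lnorm 0 (x - x') := by rw [dist_eq_norm, S.lnorm_zero_eq]
    _ ≤ C * S.lnorm 0 (x - (x' + y')) := hproj
    _ < C * (ε / C) := by gcongr
    _ = ε := by field_simp

lemma isScSubspace_ker_of_le_smoothPoints {F : Submodule ℝ E} [FiniteDimensional ℝ F]
    (hF : F ≤ S.smoothPoints) (f : E →L[ℝ] F) (hf : ∀ x : F, f x = x) :
    S.IsScSubspace (LinearMap.ker (f : E →ₗ[ℝ] F)) := by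
  refine S.isScSubspace_of_isClosed f.isClosed_ker fun m x ⟨hxG, hxm⟩ ε hε => ?_
  obtain ⟨K, hK, hKle⟩ := S.exists_lnorm_map_le (hF.trans (S.smoothPoints_le_level m)) f
  obtain ⟨y, hy, hxy⟩ := S.smooth_dense m x hxm (ε / (1 + K)) (by positivity)
  have hym : y ∈ S.level m := S.smoothPoints_le_level m hy
  refine ⟨y - f y, ⟨?_, S.smoothPoints.sub_mem hy (hF (f y).2)⟩, ?_⟩
  · change f (y - f y) = 0
    rw [map_sub, hf, sub_self]
  have hfx : f x = 0 := hxG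
  have hfy : (f y : E) = f (y - x) := by
    rw [map_sub, hfx, sub_zero]
  calc S.lnorm m (x - (y - f y)) = S.lnorm m ((x - y) + f (y - x)) := by
        rw [← hfy, sub_sub_eq_add_sub, add_sub_right_comm]
    _ ≤ S.lnorm m (x - y) + S.lnorm m (f (y - x)) :=
        S.lnorm_add m _ (sub_mem hxm hym) _ (S.smoothPoints_le_level m (hF (f _).2))
    _ ≤ S.lnorm m (x - y) + K * S.lnorm m (x - y) := by
        gcongr
        calc S.lnorm m (f (y - x)) ≤ K * S.lnorm m (y - x) := hKle _ (sub_mem hym hxm)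
          _ = K * S.lnorm m (x - y) := by rw [← S.lnorm_neg, neg_sub]
    _ = (1 + K) * S.lnorm m (x - y) := by ring
    _ < (1 + K) * (ε / (1 + K)) := by gcongr
    _ = ε := by field_simp

lemma hasScComplement_of_le_smoothPoints {F : Submodule ℝ E} [FiniteDimensional ℝ F]
    (hF : F ≤ S.smoothPoints) : S.HasScComplement F := by
  obtain ⟨f, hf⟩ := Submodule.ClosedComplemented.of_finiteDimensional F
  have hcompl : IsCompl F (LinearMap.ker (f : E →ₗ[ℝ] F)) := LinearMap.isCompl_of_proj hf
  have hFi (i : ℕ) : F ≤ S.level i := hF.trans (S.smoothPoints_le_level i)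
  refine ⟨LinearMap.ker (f : E →ₗ[ℝ] F), S.isScSubspace_ker_of_le_smoothPoints hF f hf,
    hcompl.inf_eq_bot, fun i => ?_, fun i => ?_⟩
  · rw [inf_eq_left.mpr (hFi i), ← sup_inf_assoc_of_le _ (hFi i), hcompl.sup_eq_top, top_inf_eq]
  obtain ⟨K, hK, hKle⟩ := S.exists_lnorm_map_le (hFi i) f
  refine ⟨K + 1, by positivity, fun x ⟨hxF, hxi⟩ y ⟨hyG, hyi⟩ => ?_⟩
  have hfxy : (f (x + y) : E) = x := by
    have hfy : f y = 0 := hyG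
    rw [map_add, hfy, add_zero, hf ⟨x, hxF⟩]
  calc S.lnorm i x = S.lnorm i (f (x + y)) := by rw [hfxy]
    _ ≤ K * S.lnorm i (x + y) := hKle _ (add_mem hxi hyi)
    _ ≤ (K + 1) * S.lnorm i (x + y) := by nlinarith [S.lnorm_nonneg i (x + y)]

end ScBanach

theorem finiteDimensional_hasScComplement_iff_le_smoothPoints_general
    {E : Type*} [NormedAddCommGroup E] [NormedSpace ℝ E]
    (S : ScBanach E) (F : Submodule ℝ E) [FiniteDimensional ℝ F] :
    S.HasScComplement F ↔ F ≤ S.smoothPoints :=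
  ⟨S.le_smoothPoints_of_hasScComplement, S.hasScComplement_of_le_smoothPoints⟩

/-- A finite-dimensional subspace `F` of an sc-Banach space `E` admits an
sc-complement if and only if `F ⊆ E_∞`. -/
theorem finiteDimensional_hasScComplement_iff_le_smoothPoints
    {E : Type*} [NormedAddCommGroup E] [NormedSpace ℝ E] [CompleteSpace E]
    (S : ScBanach E) (F : Submodule ℝ E) [FiniteDimensional ℝ F] :
    S.HasScComplement F ↔ F ≤ S.smoothPoints :=
  finiteDimensional_hasScComplement_iff_le_smoothPoints_general S F
end

section
/- Let (O, E) be a local sc-model and suppose r : U → U and s : V → V are sc-smooth retractions defined on open subsets U, V of E both having O as image. Then Tr(TU) = Ts(TV); in particular the tangent TO of the retract is well defined independently of the retraction. -/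
section ScMaps

variable {E F : Type*} [NormedAddCommGroup E] [NormedSpace ℝ E]
  [NormedAddCommGroup F] [NormedSpace ℝ F]

/-- `f : U → F` is of class sc⁰: it preserves every level of the filtration and
is continuous on every level. -/
def Sc0 (S : ScBanach E) (T : ScBanach F) (U : Set E) (f : E → F) : Prop :=
  ∀ m, (∀ x ∈ U ∩ (S.level m : Set E), f x ∈ T.level m) ∧
    ∀ x ∈ U ∩ (S.level m : Set E), ∀ ε > 0, ∃ δ > 0,
      ∀ y ∈ U ∩ (S.level m : Set E),
        S.lnorm m (y - x) < δ → T.lnorm m (f y - f x) < ε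

/-- `f : U → F` is of class sc¹ with sc-differential `D`: at every point `x` of
level 1 there is a bounded linear operator `D x : E₀ → F₀` such that
`‖f(x+h) - f x - D x h‖₀ = o(‖h‖₁)`, and the tangent map
`Tf(x,h) = (f x, D x h)` is of class sc⁰ from `TU = U¹ ⊕ E` to `TF = F¹ ⊕ F`. -/
structure Sc1 (S : ScBanach E) (T : ScBanach F) (U : Set E) (f : E → F) where
  sc0 : Sc0 S T U f
  D : E → E →L[ℝ] F
  hdiff : ∀ x ∈ U ∩ (S.level 1 : Set E), ∀ ε > 0, ∃ δ > 0,
      ∀ h ∈ (S.level 1 : Set E), x + h ∈ U → S.lnorm 1 h < δ →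
        ‖f (x + h) - f x - D x h‖ ≤ ε * S.lnorm 1 h
  tan_level : ∀ m, ∀ x ∈ U ∩ (S.level (m + 1) : Set E), ∀ h ∈ (S.level m : Set E),
      f x ∈ T.level (m + 1) ∧ D x h ∈ T.level m
  tan_cont : ∀ m, ∀ x ∈ U ∩ (S.level (m + 1) : Set E), ∀ h ∈ (S.level m : Set E),
      ∀ ε > 0, ∃ δ > 0, ∀ y ∈ U ∩ (S.level (m + 1) : Set E),
        ∀ k ∈ (S.level m : Set E),
          S.lnorm (m + 1) (y - x) < δ → S.lnorm m (k - h) < δ →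
          T.lnorm (m + 1) (f y - f x) + T.lnorm m (D y k - D x h) < ε

/-- The tangent `TU ⊆ E ⊕ E` of an open set `U`: base points in `U¹ = U ∩ E₁`,
tangent vectors in `E₀`. -/
def Tset (S : ScBanach E) (U : Set E) : Set (E × E) :=
  {p : E × E | p.1 ∈ U ∩ (S.level 1 : Set E)}

/-- The tangent map `Tf(x,h) = (f x, Df(x)h)`. -/
def Tmap (f : E → F) (D : E → E →L[ℝ] F) : E × E → F × F :=
  fun p => (f p.1, D p.1 p.2)

end ScMaps

section AuxProof

set_option maxHeartbeats 1000000

open Set Metric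

variable {E : Type*} [NormedAddCommGroup E] [NormedSpace ℝ E]

lemma ScBanach.lnorm_zero_s2 (S : ScBanach E) (i : ℕ) : S.lnorm i 0 = 0 := by
  have h := S.lnorm_smul i 0 0
  simpa using h

lemma dense_level_one (S : ScBanach E) : Dense (S.level 1 : Set E) := by
  rw [Metric.dense_iff]
  intro x r hr
  obtain ⟨y, hy, hxy⟩ := S.smooth_dense 0 x (by simp [S.level_zero]) r hr
  refine ⟨y, ?_, ?_⟩
  · rw [Metric.mem_ball, dist_eq_norm]
    rw [S.lnorm_zero_eq] at hxy
    rwa [norm_sub_rev]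
  · exact SetLike.mem_coe.2 ((Submodule.mem_iInf _).1 hy 1)

lemma op_bound (S : ScBanach E) {V : Set E} {s : E → E} (hs : Sc1 S S V s)
    {z : E} (hz : z ∈ V ∩ (S.level 1 : Set E)) :
    ∃ δ > 0, ∃ M : ℝ, 0 ≤ M ∧ ∀ y ∈ V ∩ (S.level 1 : Set E),
      S.lnorm 1 (y - z) < δ → ∀ w : E, ‖hs.D y w‖ ≤ M * ‖w‖ := by
  obtain ⟨δ, hδ, hcont⟩ := hs.tan_cont 0 z hz 0 (by simp [S.level_zero]) 1 one_pos
  refine ⟨δ, hδ, 2 / δ, by positivity, ?_⟩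
  intro y hy hyz w
  rcases eq_or_ne w 0 with rfl | hw
  · simp
  · have hw' : (0:ℝ) < ‖w‖ := norm_pos_iff.2 hw
    set c : ℝ := δ / (2 * ‖w‖) with hc
    have hcpos : 0 < c := by positivity
    have h1 : c * ‖hs.D y w‖ < 1 := by
      have hmem : c • w ∈ (S.level 0 : Set E) := by simp [S.level_zero]
      have hdist : S.lnorm 0 (c • w - 0) < δ := by
        rw [sub_zero, S.lnorm_zero_eq, norm_smul, Real.norm_eq_abs, abs_of_pos hcpos, hc]
        rw [div_mul_eq_mul_div, mul_comm δ ‖w‖, mul_div_assoc]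
        have h2 : δ / (2 * ‖w‖) * ‖w‖ = δ / 2 := by field_simp
        calc ‖w‖ * (δ / (2 * ‖w‖)) = δ / 2 := by rw [mul_comm, h2]
          _ < δ := by linarith
      have h3 := hcont y hy (c • w) hmem hyz hdist
      have hnn := S.lnorm_nonneg 1 (s y - s z)
      rw [S.lnorm_zero_eq] at h3
      simp only [map_zero, sub_zero, map_smul] at h3
      rw [norm_smul, Real.norm_eq_abs, abs_of_pos hcpos] at h3
      linarith
    have h2 : c * (2 / δ * ‖w‖) = 1 := by rw [hc]; field_simp
    have h4 : c * ‖hs.D y w‖ < c * (2 / δ * ‖w‖) := by rw [h2]; exact h1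
    exact le_of_lt (lt_of_mul_lt_mul_left h4 (le_of_lt hcpos))

lemma mvt_claim (S : ScBanach E) {V : Set E} {s : E → E} (hs : Sc1 S S V s)
    {z k : E} (hz1 : z ∈ S.level 1) (hk1 : k ∈ S.level 1)
    (hseg : ∀ t ∈ Icc (0:ℝ) 1, z + t • k ∈ V)
    (hsz : s z = z) (hszk : s (z + k) = z + k)
    {C : ℝ} (bound : ∀ t ∈ Icc (0:ℝ) 1, ‖hs.D (z + t • k) k - hs.D z k‖ ≤ C) :
    ‖k - hs.D z k‖ ≤ C := by
  rcases eq_or_ne k 0 with rfl | hk0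
  · have h0 := bound 0 (by constructor <;> norm_num)
    simpa using h0
  · have hL : 0 < S.lnorm 1 k :=
      lt_of_le_of_ne (S.lnorm_nonneg 1 k)
        (fun h => hk0 ((S.lnorm_eq_zero 1 k hk1).1 h.symm))
    set L := S.lnorm 1 k with hLdef
    set φ : ℝ → E := fun t => s (z + t • k) with hφ
    set ψ : ℝ → E := fun t => φ t - t • (hs.D z k) with hψ
    have hmemV1 : ∀ t ∈ Icc (0:ℝ) 1, z + t • k ∈ V ∩ (S.level 1 : Set E) := fun t ht =>
      ⟨hseg t ht, SetLike.mem_coe.2 ((S.level 1).add_mem hz1 ((S.level 1).smul_mem t hk1))⟩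
    have hderiv : ∀ t ∈ Icc (0:ℝ) 1,
        HasDerivWithinAt φ (hs.D (z + t • k) k) (Icc 0 1) t := by
      intro t ht
      rw [hasDerivWithinAt_iff_isLittleO, Asymptotics.isLittleO_iff]
      intro c hc
      obtain ⟨δ, hδ, hest⟩ := hs.hdiff (z + t • k) (hmemV1 t ht) (c / L) (by positivity)
      have hev1 : ∀ᶠ u in nhdsWithin t (Icc (0:ℝ) 1), u ∈ Icc (0:ℝ) 1 :=
        self_mem_nhdsWithin
      have hev2 : ∀ᶠ u in nhdsWithin t (Icc (0:ℝ) 1), dist u t < δ / L :=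
        eventually_nhdsWithin_of_eventually_nhds
          (Metric.eventually_nhds_iff.2 ⟨δ / L, by positivity, fun u hu => hu⟩)
      filter_upwards [hev1, hev2] with u hu hud
      have hw1 : (u - t) • k ∈ (S.level 1 : Set E) :=
        SetLike.mem_coe.2 ((S.level 1).smul_mem _ hk1)
      have heq : z + t • k + (u - t) • k = z + u • k := by
        rw [add_assoc, ← add_smul]; ring_nf
      have hV' : z + t • k + (u - t) • k ∈ V := by rw [heq]; exact hseg u hu
      have hl : S.lnorm 1 ((u - t) • k) < δ := by
        rw [S.lnorm_smul]
        have habs : |u - t| < δ / L := by rwa [Real.dist_eq] at hud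
        calc |u - t| * L < δ / L * L := mul_lt_mul_of_pos_right habs hL
          _ = δ := div_mul_cancel₀ _ (ne_of_gt hL)
      have hest' := hest ((u - t) • k) hw1 hV' hl
      rw [heq] at hest'
      have hrw : s (z + u • k) - s (z + t • k) - hs.D (z + t • k) ((u - t) • k)
          = φ u - φ t - (u - t) • hs.D (z + t • k) k := by
        rw [map_smul]
      rw [hrw] at hest'
      calc ‖φ u - φ t - (u - t) • hs.D (z + t • k) k‖
          ≤ c / L * S.lnorm 1 ((u - t) • k) := hest'
        _ = c / L * (|u - t| * L) := by rw [S.lnorm_smul]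
        _ = c * |u - t| := by field_simp
        _ = c * ‖u - t‖ := by rw [Real.norm_eq_abs]
    have hψderiv : ∀ t ∈ Icc (0:ℝ) 1,
        HasDerivWithinAt ψ (hs.D (z + t • k) k - hs.D z k) (Icc 0 1) t := by
      intro t ht
      have h2 : HasDerivWithinAt (fun u : ℝ => u • (hs.D z k)) (hs.D z k) (Icc 0 1) t := by
        simpa using ((hasDerivAt_id t).smul_const (hs.D z k)).hasDerivWithinAt
      exact (hderiv t ht).sub h2
    have hmvt := norm_image_sub_le_of_norm_deriv_le_segment' hψderiv
      (fun t ht => bound t (Ico_subset_Icc_self ht)) 1 (by constructor <;> norm_num)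
    have hone : ψ 1 - ψ 0 = k - hs.D z k := by
      simp only [hψ, hφ, one_smul, zero_smul, add_zero, hsz, hszk]
      abel
    rw [hone] at hmvt
    simpa using hmvt

lemma key_fix (S : ScBanach E) {U V O : Set E} (hU : IsOpen U) (hV : IsOpen V)
    {r s : E → E} (hsV : Set.MapsTo s V V)
    (hr : Sc1 S S U r) (hs : Sc1 S S V s)
    (hrets : ∀ x ∈ V, s (s x) = s x)
    (hrO : r '' U = O) (hsO : s '' V = O)
    {x : E} (hx : x ∈ U ∩ (S.level 1 : Set E)) {h : E} (hh : h ∈ S.level 1) :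
    hs.D (r x) (hr.D x h) = hr.D x h := by
  have hOV : O ⊆ V := by
    rw [← hsO]; rintro _ ⟨w, hw, rfl⟩; exact hsV hw
  have hfixO : ∀ y ∈ O, s y = y := by
    rw [← hsO]; rintro _ ⟨w, hw, rfl⟩; exact hrets w hw
  set z := r x with hzdef
  have hzO : z ∈ O := by rw [← hrO]; exact ⟨x, hx.1, rfl⟩
  have hz1 : z ∈ S.level 1 := (hr.tan_level 0 x hx 0 (by simp [S.level_zero])).1
  have hzV1 : z ∈ V ∩ (S.level 1 : Set E) := ⟨hOV hzO, SetLike.mem_coe.2 hz1⟩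
  have hsz : s z = z := hfixO z hzO
  set v := hr.D x h with hvdef
  rcases eq_or_ne h 0 with rfl | hne
  · simp [hvdef]
  have hL : 0 < S.lnorm 1 h :=
    lt_of_le_of_ne (S.lnorm_nonneg 1 h)
      (fun hc => hne ((S.lnorm_eq_zero 1 h hh).1 hc.symm))
  set L := S.lnorm 1 h with hLdef
  suffices hsuff : ∀ ε > 0, ‖v - hs.D z v‖ ≤ ε by
    have h0 : ‖v - hs.D z v‖ ≤ 0 := by
      by_contra hcon
      push_neg at hcon
      have := hsuff (‖v - hs.D z v‖ / 2) (by linarith)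
      linarith
    have := norm_le_zero_iff.1 h0
    rw [sub_eq_zero] at this
    exact this.symm
  intro ε hε
  obtain ⟨δ₀, hδ₀, M, hM0, hMb⟩ := op_bound S hs hzV1
  obtain ⟨δ₁, hδ₁, hcont1⟩ := hs.tan_cont 0 z hzV1 v (by simp [S.level_zero]) (ε/2) (by positivity)
  obtain ⟨ρ, hρ, hballV⟩ := Metric.isOpen_iff.1 hV z (hOV hzO)
  obtain ⟨ρU, hρU, hballU⟩ := Metric.isOpen_iff.1 hU x hx.1
  have h3M : (0:ℝ) < 3 * M + 1 := by linarith
  set ε2 := ε / (2 * (3 * M + 1) * L) with hε2def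
  have hε2 : 0 < ε2 := by
    apply div_pos hε
    have := mul_pos (mul_pos two_pos h3M) hL
    linarith
  obtain ⟨δr, hδr, hestr⟩ := hr.hdiff x hx ε2 hε2
  obtain ⟨δc, hδc, hcontr⟩ := (hr.sc0 1).2 x hx (min δ₀ δ₁) (lt_min hδ₀ hδ₁)
  have hvnn : (0:ℝ) ≤ ‖v‖ := norm_nonneg v
  have hhnn : (0:ℝ) ≤ ‖h‖ := norm_nonneg h
  have he2L : (0:ℝ) < ε2 * L := mul_pos hε2 hL
  set K := L + ‖h‖ + (ε2 * L + ‖v‖) + 1 with hKdef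
  have hKpos : 0 < K := by linarith
  set D' := min (min δr δc) (min ρU ρ) with hD'def
  have hD'pos : 0 < D' := lt_min (lt_min hδr hδc) (lt_min hρU hρ)
  set t₀ := D' / K with ht₀def
  have ht₀pos : 0 < t₀ := div_pos hD'pos hKpos
  have hsmall : ∀ a : ℝ, a < K → t₀ * a < D' := by
    intro a ha
    calc t₀ * a < t₀ * K := mul_lt_mul_of_pos_left ha ht₀pos
      _ = D' := div_mul_cancel₀ _ (ne_of_gt hKpos)
  have ht₀L : t₀ * L < min δr δc := by
    have := hsmall L (by linarith)
    exact lt_of_lt_of_le this (min_le_left _ _)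
  have ht₀h : t₀ * ‖h‖ < ρU := by
    have := hsmall ‖h‖ (by linarith)
    exact lt_of_lt_of_le this (le_trans (min_le_right _ _) (min_le_left _ _))
  -- the point y₀ and increment k
  set y₀ := x + t₀ • h with hy₀def
  have hy₀U : y₀ ∈ U := by
    apply hballU
    rw [Metric.mem_ball, dist_eq_norm, hy₀def, add_sub_cancel_left, norm_smul,
      Real.norm_eq_abs, abs_of_pos ht₀pos]
    exact ht₀h
  have hy₀1 : y₀ ∈ S.level 1 := (S.level 1).add_mem (SetLike.mem_coe.1 hx.2)
    ((S.level 1).smul_mem _ hh)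
  have hy₀U1 : y₀ ∈ U ∩ (S.level 1 : Set E) := ⟨hy₀U, SetLike.mem_coe.2 hy₀1⟩
  set k := r y₀ - z with hkdef
  have hkmem : k ∈ S.level 1 :=
    (S.level 1).sub_mem ((hr.tan_level 0 y₀ hy₀U1 0 (by simp [S.level_zero])).1) hz1
  have hzk : z + k = r y₀ := by rw [hkdef]; abel
  have hzkO : z + k ∈ O := by rw [hzk, ← hrO]; exact ⟨y₀, hy₀U, rfl⟩
  have hszk : s (z + k) = z + k := hfixO _ hzkO
  have hy₀x : S.lnorm 1 (y₀ - x) = t₀ * L := by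
    rw [hy₀def, add_sub_cancel_left, S.lnorm_smul, abs_of_pos ht₀pos]
  have hlk : S.lnorm 1 k < min δ₀ δ₁ := by
    have := hcontr y₀ hy₀U1 (by rw [hy₀x]; exact lt_of_lt_of_le ht₀L (min_le_right _ _))
    rwa [← hkdef] at this
  have hlkδ₀ : S.lnorm 1 k < δ₀ := lt_of_lt_of_le hlk (min_le_left _ _)
  have hlkδ₁ : S.lnorm 1 k < δ₁ := lt_of_lt_of_le hlk (min_le_right _ _)
  have hke : ‖k - t₀ • v‖ ≤ ε2 * (t₀ * L) := by
    have hest := hestr (t₀ • h) (SetLike.mem_coe.2 ((S.level 1).smul_mem _ hh))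
      (by rw [← hy₀def]; exact hy₀U)
      (by rw [S.lnorm_smul, abs_of_pos ht₀pos]; exact lt_of_lt_of_le ht₀L (min_le_left _ _))
    rw [map_smul] at hest
    rw [S.lnorm_smul, abs_of_pos ht₀pos] at hest
    exact hest
  have hknorm : ‖k‖ < ρ := by
    have h1 : ‖k‖ ≤ ‖k - t₀ • v‖ + ‖t₀ • v‖ := by
      have := norm_add_le (k - t₀ • v) (t₀ • v)
      rwa [sub_add_cancel] at this
    have h2 : ‖t₀ • v‖ = t₀ * ‖v‖ := by
      rw [norm_smul, Real.norm_eq_abs, abs_of_pos ht₀pos]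
    have h3 : ‖k‖ ≤ t₀ * (ε2 * L + ‖v‖) := by
      calc ‖k‖ ≤ ‖k - t₀ • v‖ + ‖t₀ • v‖ := h1
        _ ≤ ε2 * (t₀ * L) + t₀ * ‖v‖ := by rw [h2]; linarith [hke]
        _ = t₀ * (ε2 * L + ‖v‖) := by ring
    calc ‖k‖ ≤ t₀ * (ε2 * L + ‖v‖) := h3
      _ < D' := hsmall _ (by linarith)
      _ ≤ ρ := le_trans (min_le_right _ _) (min_le_right _ _)
  have hseg : ∀ t ∈ Icc (0:ℝ) 1, z + t • k ∈ V := by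
    intro t ht
    apply hballV
    rw [Metric.mem_ball, dist_eq_norm, add_sub_cancel_left, norm_smul, Real.norm_eq_abs]
    calc |t| * ‖k‖ ≤ 1 * ‖k‖ := by
          apply mul_le_mul_of_nonneg_right _ (norm_nonneg k)
          rw [abs_le]; constructor <;> linarith [ht.1, ht.2]
      _ = ‖k‖ := one_mul _
      _ < ρ := hknorm
  set e := ‖k - t₀ • v‖ with hedef
  have hbound : ∀ t ∈ Icc (0:ℝ) 1,
      ‖hs.D (z + t • k) k - hs.D z k‖ ≤ 2 * M * e + t₀ * (ε / 2) := by
    intro t ht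
    have hmem1 : z + t • k ∈ V ∩ (S.level 1 : Set E) :=
      ⟨hseg t ht, SetLike.mem_coe.2 ((S.level 1).add_mem hz1 ((S.level 1).smul_mem t hkmem))⟩
    have hdist1 : S.lnorm 1 (z + t • k - z) < δ₀ := by
      rw [add_sub_cancel_left, S.lnorm_smul]
      calc |t| * S.lnorm 1 k ≤ 1 * S.lnorm 1 k := by
            apply mul_le_mul_of_nonneg_right _ (S.lnorm_nonneg 1 k)
            rw [abs_le]; constructor <;> linarith [ht.1, ht.2]
        _ = S.lnorm 1 k := one_mul _
        _ < δ₀ := hlkδ₀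
    have hdist1' : S.lnorm 1 (z + t • k - z) < δ₁ := by
      rw [add_sub_cancel_left, S.lnorm_smul]
      calc |t| * S.lnorm 1 k ≤ 1 * S.lnorm 1 k := by
            apply mul_le_mul_of_nonneg_right _ (S.lnorm_nonneg 1 k)
            rw [abs_le]; constructor <;> linarith [ht.1, ht.2]
        _ = S.lnorm 1 k := one_mul _
        _ < δ₁ := hlkδ₁
    have h1 : ‖hs.D (z + t • k) (k - t₀ • v)‖ ≤ M * e := hMb _ hmem1 hdist1 _
    have h2 : ‖hs.D (z + t • k) v - hs.D z v‖ ≤ ε / 2 := by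
      have hc := hcont1 (z + t • k) hmem1 v (by simp [S.level_zero]) hdist1'
        (by rw [sub_self, S.lnorm_zero_s2]; exact hδ₁)
      have hnn := S.lnorm_nonneg 1 (s (z + t • k) - s z)
      rw [S.lnorm_zero_eq] at hc
      linarith
    have h3 : ‖hs.D z (t₀ • v - k)‖ ≤ M * e := by
      rw [hedef, norm_sub_rev k (t₀ • v)]
      exact hMb z ⟨hOV hzO, SetLike.mem_coe.2 hz1⟩
        (by rw [sub_self, S.lnorm_zero_s2]; exact hδ₀) (t₀ • v - k)
    have hdecomp : hs.D (z + t • k) k - hs.D z k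
        = hs.D (z + t • k) (k - t₀ • v) + t₀ • (hs.D (z + t • k) v - hs.D z v)
          + hs.D z (t₀ • v - k) := by
      simp only [map_sub, map_smul, smul_sub]
      abel
    rw [hdecomp]
    calc ‖hs.D (z + t • k) (k - t₀ • v) + t₀ • (hs.D (z + t • k) v - hs.D z v)
          + hs.D z (t₀ • v - k)‖
        ≤ ‖hs.D (z + t • k) (k - t₀ • v) + t₀ • (hs.D (z + t • k) v - hs.D z v)‖
          + ‖hs.D z (t₀ • v - k)‖ := norm_add_le _ _
      _ ≤ ‖hs.D (z + t • k) (k - t₀ • v)‖ + ‖t₀ • (hs.D (z + t • k) v - hs.D z v)‖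
          + ‖hs.D z (t₀ • v - k)‖ := by linarith [norm_add_le (hs.D (z + t • k) (k - t₀ • v)) (t₀ • (hs.D (z + t • k) v - hs.D z v))]
      _ ≤ M * e + t₀ * (ε / 2) + M * e := by
          have h4 : ‖t₀ • (hs.D (z + t • k) v - hs.D z v)‖ ≤ t₀ * (ε / 2) := by
            rw [norm_smul, Real.norm_eq_abs, abs_of_pos ht₀pos]
            exact mul_le_mul_of_nonneg_left h2 (le_of_lt ht₀pos)
          linarith
      _ = 2 * M * e + t₀ * (ε / 2) := by ring
  have hmain := mvt_claim S hs hz1 hkmem hseg hsz hszk hbound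
  -- combine
  have hDzk : ‖hs.D z (k - t₀ • v)‖ ≤ M * e :=
    hMb z ⟨hOV hzO, SetLike.mem_coe.2 hz1⟩ (by rw [sub_self, S.lnorm_zero_s2]; exact hδ₀) _
  have hfin : t₀ * ‖v - hs.D z v‖ ≤ (3 * M + 1) * e + t₀ * (ε / 2) := by
    have hdec : t₀ • v - t₀ • hs.D z v
        = (t₀ • v - k) + (k - hs.D z k) + (hs.D z k - t₀ • hs.D z v) := by abel
    have hDt : hs.D z (t₀ • v) = t₀ • hs.D z v := map_smul _ _ _
    have hn1 : ‖t₀ • v - k‖ = e := by rw [hedef, norm_sub_rev]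
    have hn3 : ‖hs.D z k - t₀ • hs.D z v‖ ≤ M * e := by
      have heq3 : hs.D z k - t₀ • hs.D z v = hs.D z (k - t₀ • v) := by
        rw [← hDt, ← map_sub]
      rw [heq3]; exact hDzk
    have htri : ‖t₀ • v - t₀ • hs.D z v‖ ≤ e + (2 * M * e + t₀ * (ε / 2)) + M * e := by
      rw [hdec]
      calc ‖(t₀ • v - k) + (k - hs.D z k) + (hs.D z k - t₀ • hs.D z v)‖
          ≤ ‖(t₀ • v - k) + (k - hs.D z k)‖ + ‖hs.D z k - t₀ • hs.D z v‖ :=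
            norm_add_le _ _
        _ ≤ ‖t₀ • v - k‖ + ‖k - hs.D z k‖ + ‖hs.D z k - t₀ • hs.D z v‖ := by
            linarith [norm_add_le (t₀ • v - k) (k - hs.D z k)]
        _ ≤ e + (2 * M * e + t₀ * (ε / 2)) + M * e := by
            rw [hn1]; linarith
    have hsm : ‖t₀ • v - t₀ • hs.D z v‖ = t₀ * ‖v - hs.D z v‖ := by
      rw [← smul_sub, norm_smul, Real.norm_eq_abs, abs_of_pos ht₀pos]
    rw [hsm] at htri
    linarith
  have hee : (3 * M + 1) * e ≤ t₀ * (ε / 2) := by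
    have h5 : (3 * M + 1) * e ≤ (3 * M + 1) * (ε2 * (t₀ * L)) :=
      mul_le_mul_of_nonneg_left hke (le_of_lt h3M)
    have h6 : (3 * M + 1) * (ε2 * (t₀ * L)) = t₀ * (ε / 2) := by
      rw [hε2def]
      field_simp
    linarith
  have h7 : t₀ * ‖v - hs.D z v‖ ≤ t₀ * ε := by
    calc t₀ * ‖v - hs.D z v‖ ≤ (3 * M + 1) * e + t₀ * (ε / 2) := hfin
      _ ≤ t₀ * (ε / 2) + t₀ * (ε / 2) := by linarith
      _ = t₀ * ε := by ring
  exact le_of_mul_le_mul_left h7 ht₀pos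

lemma key_fix_all (S : ScBanach E) {U V O : Set E} (hU : IsOpen U) (hV : IsOpen V)
    {r s : E → E} (hsV : Set.MapsTo s V V)
    (hr : Sc1 S S U r) (hs : Sc1 S S V s)
    (hrets : ∀ x ∈ V, s (s x) = s x)
    (hrO : r '' U = O) (hsO : s '' V = O)
    {x : E} (hx : x ∈ U ∩ (S.level 1 : Set E)) (h : E) :
    hs.D (r x) (hr.D x h) = hr.D x h := by
  have heq : (fun w => hs.D (r x) (hr.D x w)) = fun w => hr.D x w :=
    Continuous.ext_on (dense_level_one S)
      ((hs.D (r x)).continuous.comp (hr.D x).continuous) (hr.D x).continuous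
      (fun w hw => key_fix S hU hV hsV hr hs hrets hrO hsO hx (SetLike.mem_coe.1 hw))
  exact congrFun heq h

lemma tmap_incl (S : ScBanach E) (U V O : Set E) (hU : IsOpen U) (hV : IsOpen V)
    (r s : E → E) (hrU : Set.MapsTo r U U) (hsV : Set.MapsTo s V V)
    (hr : Sc1 S S U r) (hs : Sc1 S S V s)
    (hretr : ∀ x ∈ U, r (r x) = r x) (hrets : ∀ x ∈ V, s (s x) = s x)
    (hrO : r '' U = O) (hsO : s '' V = O) :
    Tmap r hr.D '' Tset S U ⊆ Tmap s hs.D '' Tset S V := by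
  rintro q ⟨⟨x, h⟩, hp, rfl⟩
  have hx : x ∈ U ∩ (S.level 1 : Set E) := hp
  have hOV : O ⊆ V := by
    rw [← hsO]; rintro _ ⟨w, hw, rfl⟩; exact hsV hw
  have hfixO : ∀ y ∈ O, s y = y := by
    rw [← hsO]; rintro _ ⟨w, hw, rfl⟩; exact hrets w hw
  have hzO : r x ∈ O := by rw [← hrO]; exact ⟨x, hx.1, rfl⟩
  have hz1 : r x ∈ S.level 1 := (hr.tan_level 0 x hx 0 (by simp [S.level_zero])).1
  refine ⟨(r x, hr.D x h), ?_, ?_⟩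
  · exact ⟨hOV hzO, SetLike.mem_coe.2 hz1⟩
  · show (s (r x), hs.D (r x) (hr.D x h)) = (r x, hr.D x h)
    rw [hfixO _ hzO, key_fix_all S hU hV hsV hr hs hrets hrO hsO hx h]

end AuxProof

/-- If `r : U → U` and `s : V → V` are two sc-smooth retractions on open subsets
of the same sc-Banach space `E` having the same image `O`, then
`Tr(TU) = Ts(TV)`: the tangent `TO` of the sc-smooth retract `(O,E)` is
well defined, independently of the choice of retraction. -/
theorem tangent_of_retract_well_defined
    {E : Type*} [NormedAddCommGroup E] [NormedSpace ℝ E]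
    (S : ScBanach E) (U V O : Set E) (hU : IsOpen U) (hV : IsOpen V)
    (r s : E → E) (hrU : Set.MapsTo r U U) (hsV : Set.MapsTo s V V)
    (hr : Sc1 S S U r) (hs : Sc1 S S V s)
    (hretr : ∀ x ∈ U, r (r x) = r x) (hrets : ∀ x ∈ V, s (s x) = s x)
    (hrO : r '' U = O) (hsO : s '' V = O) :
    Tmap r hr.D '' Tset S U = Tmap s hs.D '' Tset S V :=
  Set.Subset.antisymm
    (tmap_incl S U V O hU hV r s hrU hsV hr hs hretr hrets hrO hsO)
    (tmap_incl S V U O hV hU s r hsV hrU hs hr hrets hretr hsO hrO)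
end

section
/- Let (O,E), (O',E'), (O'',E'') be local sc-models and f : O → O', g : O' → O'' be sc¹ maps (meaning f ∘ r and g ∘ r' are sc¹ for sc-smooth retractions r, r' onto O, O'). Then g ∘ f : O → O'' is sc¹ and T(g ∘ f) = (Tg) ∘ (Tf). -/
section ChainRuleAux

theorem ScBanach.lnorm_zero_vec {E : Type*} [NormedAddCommGroup E] [NormedSpace ℝ E]
    (S : ScBanach E) (i : ℕ) : S.lnorm i (0 : E) = 0 := by
  have h := S.lnorm_smul i 0 0
  simpa using h

theorem hasDerivAt_of_est {E : Type*} [NormedAddCommGroup E] [NormedSpace ℝ E]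
    {f : ℝ → E} {v : E} {t : ℝ}
    (h : ∀ ε > 0, ∃ δ > 0, ∀ s : ℝ, |s| < δ → |s| ≤ 1 →
      ‖f (t + s) - f t - s • v‖ ≤ ε * |s|) :
    HasDerivAt f v t := by
  rw [hasDerivAt_iff_isLittleO, Asymptotics.isLittleO_iff]
  intro c hc
  obtain ⟨δ, hδ, hb⟩ := h c hc
  rw [Metric.eventually_nhds_iff]
  refine ⟨min δ 1, lt_min hδ one_pos, fun y hy => ?_⟩
  have hy' : |y - t| < min δ 1 := by simpa [Real.dist_eq] using hy
  have h1 : |y - t| < δ := lt_of_lt_of_le hy' (min_le_left _ _)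
  have h2 : |y - t| ≤ 1 := (lt_of_lt_of_le hy' (min_le_right _ _)).le
  have h3 := hb (y - t) h1 h2
  have h4 : t + (y - t) = y := by ring
  rw [h4] at h3
  simpa [Real.norm_eq_abs] using h3

end ChainRuleAux
section CompSection

variable {E E' E'' : Type*} [NormedAddCommGroup E] [NormedSpace ℝ E]
  [NormedAddCommGroup E'] [NormedSpace ℝ E']
  [NormedAddCommGroup E''] [NormedSpace ℝ E'']

set_option maxHeartbeats 2000000 in
/-- Chain rule for `Sc1` maps on open sets, stated for any function `Φ` agreeing
with `G ∘ F` on `U`. -/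
def sc1CompCongr (S : ScBanach E) (S' : ScBanach E') (S'' : ScBanach E'')
    {U : Set E} {V : Set E'} (hV : IsOpen V)
    {F : E → E'} {G : E' → E''} {Φ : E → E''}
    (hF : Sc1 S S' U F) (hG : Sc1 S' S'' V G)
    (hFV : ∀ x ∈ U, F x ∈ V)
    (hΦ : ∀ x ∈ U, Φ x = G (F x)) :
    Sc1 S S'' U Φ where
  sc0 := by
    intro m
    constructor
    · intro x hx
      rw [hΦ x hx.1]
      exact (hG.sc0 m).1 (F x) ⟨hFV x hx.1, (hF.sc0 m).1 x hx⟩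
    · intro x hx ε hε
      obtain ⟨δ₁, hδ₁, h₁⟩ := (hG.sc0 m).2 (F x) ⟨hFV x hx.1, (hF.sc0 m).1 x hx⟩ ε hε
      obtain ⟨δ, hδ, h₂⟩ := (hF.sc0 m).2 x hx δ₁ hδ₁
      refine ⟨δ, hδ, fun y hy hclose => ?_⟩
      rw [hΦ x hx.1, hΦ y hy.1]
      exact h₁ (F y) ⟨hFV y hy.1, (hF.sc0 m).1 y hy⟩ (h₂ y hy hclose)
  D := fun x => (hG.D (F x)).comp (hF.D x)
  hdiff := by
    intro x hx ε hε
    obtain ⟨hxU, hx1⟩ := hx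
    by_contra hcon
    push_neg at hcon
    choose hh hmem hxh hlt hbad using fun n : ℕ => hcon (1 / ((n : ℝ) + 1)) (by positivity)
    have hτpos : ∀ n, 0 < S.lnorm 1 (hh n) := by
      intro n
      rcases (S.lnorm_nonneg 1 (hh n)).lt_or_eq with h | h
      · exact h
      · exfalso
        have h0 : hh n = 0 := (S.lnorm_eq_zero 1 (hh n) (hmem n)).mp h.symm
        have hb := hbad n
        rw [h0] at hb
        simp only [add_zero, map_zero, sub_zero, sub_self, norm_zero,
          ScBanach.lnorm_zero_vec, mul_zero, lt_self_iff_false] at hb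
    set e : ℕ → E := fun n => (S.lnorm 1 (hh n))⁻¹ • hh n with he
    have hemem : ∀ n, e n ∈ S.level 1 := fun n => Submodule.smul_mem _ _ (hmem n)
    have he1 : ∀ n, S.lnorm 1 (e n) = 1 := by
      intro n
      rw [he]
      simp only
      rw [S.lnorm_smul, abs_inv, abs_of_pos (hτpos n), inv_mul_cancel₀ (hτpos n).ne']
    obtain ⟨φ, hφ, hcau⟩ := S.incl_compact 0 e hemem ⟨1, fun n => (he1 n).le⟩
    obtain ⟨elim, -, hconv⟩ := S.level_complete 0 (fun n => e (φ n))
      (fun n => by rw [S.level_zero]; trivial) hcau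
    -- constants
    have hFxV : F x ∈ V := hFV x hxU
    have hFx1 : F x ∈ S'.level 1 := (hF.sc0 1).1 x ⟨hxU, hx1⟩
    obtain ⟨ρ, hρ, hball⟩ := Metric.isOpen_iff.mp hV (F x) hFxV
    obtain ⟨C, hC, hCb⟩ := S'.incl_bounded 0
    obtain ⟨δ₂, hδ₂, htc⟩ := hG.tan_cont 0 (F x) ⟨hFxV, hFx1⟩ (hF.D x elim)
      (by rw [S'.level_zero]; trivial) (ε / 4) (by positivity)
    set ε₃ : ℝ := min (ε / (2 * (‖hG.D (F x)‖ + 1))) (δ₂ / 4) with hε₃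
    have hε₃pos : 0 < ε₃ := lt_min (by positivity) (by positivity)
    obtain ⟨δ₃, hδ₃, hFdiff⟩ := hF.hdiff x ⟨hxU, hx1⟩ ε₃ hε₃pos
    have hεF : (0 : ℝ) < min δ₂ (ρ / (2 * C)) := lt_min hδ₂ (by positivity)
    obtain ⟨δ₄, hδ₄, hFcont⟩ := (hF.sc0 1).2 x ⟨hxU, hx1⟩ (min δ₂ (ρ / (2 * C))) hεF
    obtain ⟨N₁, hN₁⟩ := hconv (δ₂ / (2 * (‖hF.D x‖ + 1))) (by positivity)
    obtain ⟨N₂, hN₂⟩ := exists_nat_one_div_lt (show (0 : ℝ) < min δ₃ δ₄ from lt_min hδ₃ hδ₄)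
    set n := φ (max N₁ N₂) with hn
    have hτsmall : S.lnorm 1 (hh n) < min δ₃ δ₄ := by
      have h2 : ((N₂ : ℝ) + 1) ≤ ((n : ℝ) + 1) := by
        have : (N₂ : ℕ) ≤ n := le_trans (le_max_right N₁ N₂) hφ.le_apply
        exact_mod_cast Nat.succ_le_succ this
      calc S.lnorm 1 (hh n) < 1 / ((n : ℝ) + 1) := hlt n
        _ ≤ 1 / ((N₂ : ℝ) + 1) := by
            apply one_div_le_one_div_of_le (by positivity) h2
        _ < min δ₃ δ₄ := hN₂
    have hecv : S.lnorm 0 (e n - elim) < δ₂ / (2 * (‖hF.D x‖ + 1)) := by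
      rw [hn]; exact hN₁ (max N₁ N₂) (le_max_left _ _)
    have hh1 : hh n ∈ S.level 1 := hmem n
    have hxhU : x + hh n ∈ U := hxh n
    have hxh1 : x + hh n ∈ S.level 1 := add_mem hx1 hh1
    set k : E' := F (x + hh n) - F x with hk
    have hk1 : k ∈ S'.level 1 := sub_mem ((hF.sc0 1).1 _ ⟨hxhU, hxh1⟩) hFx1
    clear_value k
    have hkδ : S'.lnorm 1 k < min δ₂ (ρ / (2 * C)) := by
      have h1 : S.lnorm 1 (x + hh n - x) < δ₄ := by
        rw [add_sub_cancel_left]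
        exact lt_of_lt_of_le hτsmall (min_le_right _ _)
      have := hFcont (x + hh n) ⟨hxhU, hxh1⟩ h1
      rw [hk]; exact this
    have hkδ₂ : S'.lnorm 1 k < δ₂ := lt_of_lt_of_le hkδ (min_le_left _ _)
    have hkρ : S'.lnorm 1 k < ρ / (2 * C) := lt_of_lt_of_le hkδ (min_le_right _ _)
    have hknorm : ‖k‖ ≤ C * S'.lnorm 1 k := by
      rw [← S'.lnorm_zero_eq]
      exact hCb k hk1
    have hFdiff' : ‖k - hF.D x (hh n)‖ ≤ ε₃ * S.lnorm 1 (hh n) := by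
      have := hFdiff (hh n) hh1 hxhU (lt_of_lt_of_le hτsmall (min_le_left _ _))
      rw [hk]; exact this
    have hyV : ∀ t : ℝ, |t| ≤ 2 → F x + t • k ∈ V := by
      intro t ht
      apply hball
      rw [Metric.mem_ball, dist_eq_norm, add_sub_cancel_left, norm_smul, Real.norm_eq_abs]
      calc |t| * ‖k‖ ≤ 2 * (C * S'.lnorm 1 k) :=
            mul_le_mul ht hknorm (norm_nonneg _) (by norm_num)
        _ < 2 * (C * (ρ / (2 * C))) := by
            apply mul_lt_mul_of_pos_left _ (by norm_num)
            exact mul_lt_mul_of_pos_left hkρ hC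
        _ = ρ := by field_simp
    have hyt1 : ∀ t : ℝ, F x + t • k ∈ S'.level 1 :=
      fun t => add_mem hFx1 (Submodule.smul_mem _ _ hk1)
    have hyt_lnorm : ∀ t : ℝ, |t| ≤ 1 → S'.lnorm 1 (F x + t • k - F x) < δ₂ := by
      intro t ht
      rw [add_sub_cancel_left, S'.lnorm_smul]
      calc |t| * S'.lnorm 1 k ≤ 1 * S'.lnorm 1 k :=
            mul_le_mul_of_nonneg_right ht (S'.lnorm_nonneg _ _)
        _ = S'.lnorm 1 k := one_mul _
        _ < δ₂ := hkδ₂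
    -- closeness of normalized increment to the limit direction
    have hkey : S'.lnorm 0 ((S.lnorm 1 (hh n))⁻¹ • k - hF.D x elim) < δ₂ := by
      rw [S'.lnorm_zero_eq]
      have h1 : (S.lnorm 1 (hh n))⁻¹ • k - hF.D x (e n)
          = (S.lnorm 1 (hh n))⁻¹ • (k - hF.D x (hh n)) := by
        rw [he]
        simp only [map_smul, smul_sub]
      have h2 : ‖(S.lnorm 1 (hh n))⁻¹ • k - hF.D x (e n)‖ ≤ ε₃ := by
        rw [h1, norm_smul, Real.norm_eq_abs, abs_inv, abs_of_pos (hτpos n)]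
        calc (S.lnorm 1 (hh n))⁻¹ * ‖k - hF.D x (hh n)‖
            ≤ (S.lnorm 1 (hh n))⁻¹ * (ε₃ * S.lnorm 1 (hh n)) :=
              mul_le_mul_of_nonneg_left hFdiff' (inv_nonneg.mpr (hτpos n).le)
          _ = ε₃ := by
              rw [mul_comm ε₃ (S.lnorm 1 (hh n)), ← mul_assoc,
                inv_mul_cancel₀ (hτpos n).ne', one_mul]
      have h3 : ‖hF.D x (e n) - hF.D x elim‖ ≤ ‖hF.D x‖ * ‖e n - elim‖ := by
        rw [← map_sub]
        exact (hF.D x).le_opNorm _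
      have h4 : ‖e n - elim‖ < δ₂ / (2 * (‖hF.D x‖ + 1)) := by
        rw [← S.lnorm_zero_eq]; exact hecv
      have h5 : ‖hF.D x‖ * ‖e n - elim‖ ≤ δ₂ / 2 := by
        have h6 : (0:ℝ) ≤ ‖hF.D x‖ := norm_nonneg _
        have h7 : (0:ℝ) ≤ ‖e n - elim‖ := norm_nonneg _
        have h8 : ‖e n - elim‖ * (2 * (‖hF.D x‖ + 1)) ≤ δ₂ := by
          rw [← le_div_iff₀ (by positivity)]
          exact h4.le
        nlinarith
      have hε₃le : ε₃ ≤ δ₂ / 4 := min_le_right _ _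
      calc ‖(S.lnorm 1 (hh n))⁻¹ • k - hF.D x elim‖
          = ‖((S.lnorm 1 (hh n))⁻¹ • k - hF.D x (e n)) + (hF.D x (e n) - hF.D x elim)‖ := by
            rw [sub_add_sub_cancel]
        _ ≤ ‖(S.lnorm 1 (hh n))⁻¹ • k - hF.D x (e n)‖ + ‖hF.D x (e n) - hF.D x elim‖ :=
            norm_add_le _ _
        _ ≤ δ₂ / 4 + δ₂ / 2 := add_le_add (h2.trans hε₃le) (h3.trans h5)
        _ < δ₂ := by linarith
    -- uniform derivative bound on the segment
    have hDbound : ∀ t : ℝ, |t| ≤ 1 →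
        ‖hG.D (F x + t • k) k - hG.D (F x) k‖ ≤ ε / 2 * S.lnorm 1 (hh n) := by
      intro t ht
      have hm0 : (S.lnorm 1 (hh n))⁻¹ • k ∈ (S'.level 0 : Set E') := by
        rw [S'.level_zero]; trivial
      have hA := htc (F x + t • k) ⟨hyV t (by linarith), hyt1 t⟩
        ((S.lnorm 1 (hh n))⁻¹ • k) hm0 (hyt_lnorm t ht) hkey
      have hB := htc (F x) ⟨hFxV, hFx1⟩ ((S.lnorm 1 (hh n))⁻¹ • k) hm0
        (by rw [sub_self, ScBanach.lnorm_zero_vec]; exact hδ₂) hkey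
      have hA' : ‖hG.D (F x + t • k) ((S.lnorm 1 (hh n))⁻¹ • k) - hG.D (F x) (hF.D x elim)‖ < ε / 4 := by
        rw [← S''.lnorm_zero_eq]
        exact lt_of_le_of_lt (le_add_of_nonneg_left (S''.lnorm_nonneg _ _)) hA
      have hB' : ‖hG.D (F x) ((S.lnorm 1 (hh n))⁻¹ • k) - hG.D (F x) (hF.D x elim)‖ < ε / 4 := by
        rw [← S''.lnorm_zero_eq]
        exact lt_of_le_of_lt (le_add_of_nonneg_left (S''.lnorm_nonneg _ _)) hB
      have hdiffop : ‖hG.D (F x + t • k) ((S.lnorm 1 (hh n))⁻¹ • k)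
          - hG.D (F x) ((S.lnorm 1 (hh n))⁻¹ • k)‖ < ε / 2 := by
        have h9 : hG.D (F x + t • k) ((S.lnorm 1 (hh n))⁻¹ • k)
            - hG.D (F x) ((S.lnorm 1 (hh n))⁻¹ • k)
            = (hG.D (F x + t • k) ((S.lnorm 1 (hh n))⁻¹ • k) - hG.D (F x) (hF.D x elim))
              - (hG.D (F x) ((S.lnorm 1 (hh n))⁻¹ • k) - hG.D (F x) (hF.D x elim)) := by
          abel
        rw [h9]
        calc ‖_ - _‖ ≤ ‖_‖ + ‖_‖ := norm_sub_le _ _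
          _ < ε / 4 + ε / 4 := add_lt_add hA' hB'
          _ = ε / 2 := by ring
      have hksmul : S.lnorm 1 (hh n) • ((S.lnorm 1 (hh n))⁻¹ • k) = k :=
        smul_inv_smul₀ (hτpos n).ne' k
      calc ‖hG.D (F x + t • k) k - hG.D (F x) k‖
          = ‖S.lnorm 1 (hh n) • (hG.D (F x + t • k) ((S.lnorm 1 (hh n))⁻¹ • k)
              - hG.D (F x) ((S.lnorm 1 (hh n))⁻¹ • k))‖ := by
            rw [smul_sub, ← map_smul, ← map_smul, hksmul]
        _ = S.lnorm 1 (hh n) * ‖hG.D (F x + t • k) ((S.lnorm 1 (hh n))⁻¹ • k)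
              - hG.D (F x) ((S.lnorm 1 (hh n))⁻¹ • k)‖ := by
            rw [norm_smul, Real.norm_eq_abs, abs_of_pos (hτpos n)]
        _ ≤ S.lnorm 1 (hh n) * (ε / 2) :=
            mul_le_mul_of_nonneg_left hdiffop.le (hτpos n).le
        _ = ε / 2 * S.lnorm 1 (hh n) := mul_comm _ _
    -- the segment function is differentiable
    have hderiv : ∀ t ∈ Set.Icc (0 : ℝ) 1,
        HasDerivAt (fun u : ℝ => G (F x + u • k) - u • hG.D (F x) k)
          (hG.D (F x + t • k) k - hG.D (F x) k) t := by
      intro t ht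
      have habs : |t| ≤ 1 := by rw [abs_of_nonneg ht.1]; exact ht.2
      have h1 : HasDerivAt (fun u : ℝ => G (F x + u • k)) (hG.D (F x + t • k) k) t := by
        apply hasDerivAt_of_est
        intro ε' hε'
        obtain ⟨δ', hδ', hGd⟩ := hG.hdiff (F x + t • k) ⟨hyV t (by linarith), hyt1 t⟩
          (ε' / (S'.lnorm 1 k + 1))
          (by have := S'.lnorm_nonneg 1 k; positivity)
        have hL : (0:ℝ) ≤ S'.lnorm 1 k := S'.lnorm_nonneg 1 k
        refine ⟨δ' / (S'.lnorm 1 k + 1), by positivity, fun s hs hs1 => ?_⟩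
        have hsk1 : s • k ∈ S'.level 1 := Submodule.smul_mem _ _ hk1
        have hVmem : (F x + t • k) + s • k ∈ V := by
          rw [add_assoc, ← add_smul]
          refine hyV (t + s) ?_
          calc |t + s| ≤ |t| + |s| := abs_add_le _ _
            _ ≤ 2 := by linarith
        have hlns : S'.lnorm 1 (s • k) < δ' := by
          rw [S'.lnorm_smul]
          calc |s| * S'.lnorm 1 k ≤ |s| * (S'.lnorm 1 k + 1) := by
                apply mul_le_mul_of_nonneg_left (by linarith) (abs_nonneg s)
            _ < (δ' / (S'.lnorm 1 k + 1)) * (S'.lnorm 1 k + 1) :=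
                mul_lt_mul_of_pos_right hs (by positivity)
            _ = δ' := by field_simp
        have hest := hGd (s • k) hsk1 hVmem hlns
        rw [S'.lnorm_smul] at hest
        have hrw : (F x + t • k) + s • k = F x + (t + s) • k := by
          rw [add_assoc, ← add_smul]
        rw [hrw, map_smul] at hest
        refine le_trans hest ?_
        calc ε' / (S'.lnorm 1 k + 1) * (|s| * S'.lnorm 1 k)
            ≤ ε' / (S'.lnorm 1 k + 1) * (|s| * (S'.lnorm 1 k + 1)) := by
              apply mul_le_mul_of_nonneg_left _ (by positivity)
              apply mul_le_mul_of_nonneg_left (by linarith) (abs_nonneg s)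
          _ = ε' * |s| := by field_simp
      have h2 : HasDerivAt (fun u : ℝ => u • hG.D (F x) k) (hG.D (F x) k) t := by
        simpa using (hasDerivAt_id t).smul_const (hG.D (F x) k)
      exact h1.sub h2
    -- mean value estimate
    have hMVT : ‖(G (F x + (1:ℝ) • k) - (1:ℝ) • hG.D (F x) k)
        - (G (F x + (0:ℝ) • k) - (0:ℝ) • hG.D (F x) k)‖ ≤ ε / 2 * S.lnorm 1 (hh n) := by
      apply norm_image_sub_le_of_norm_deriv_le_segment_01'
        (f := fun t : ℝ => G (F x + t • k) - t • hG.D (F x) k)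
        (f' := fun t => hG.D (F x + t • k) k - hG.D (F x) k)
      · intro t ht
        exact (hderiv t ht).hasDerivWithinAt
      · intro t ht
        apply hDbound t
        rw [abs_of_nonneg ht.1]
        exact ht.2.le
    have hAbound : ‖G (F x + k) - G (F x) - hG.D (F x) k‖ ≤ ε / 2 * S.lnorm 1 (hh n) := by
      have h9 := hMVT
      simp only [one_smul, zero_smul, add_zero, sub_zero] at h9
      have h10 : G (F x + k) - hG.D (F x) k - G (F x)
          = G (F x + k) - G (F x) - hG.D (F x) k := by abel
      rwa [h10] at h9
    have hBbound : ‖hG.D (F x) (k - hF.D x (hh n))‖ ≤ ε / 2 * S.lnorm 1 (hh n) := by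
      have hop := (hG.D (F x)).le_opNorm (k - hF.D x (hh n))
      have h1' : ε₃ * (2 * (‖hG.D (F x)‖ + 1)) ≤ ε := by
        rw [← le_div_iff₀ (by positivity)]
        exact min_le_left _ _
      have h2 : (0:ℝ) ≤ ‖hG.D (F x)‖ := norm_nonneg _
      have h3 : 0 < S.lnorm 1 (hh n) := hτpos n
      have h5 : ‖hG.D (F x)‖ * ε₃ ≤ ε / 2 := by nlinarith [hε₃pos.le]
      calc ‖hG.D (F x) (k - hF.D x (hh n))‖ ≤ ‖hG.D (F x)‖ * ‖k - hF.D x (hh n)‖ := hop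
        _ ≤ ‖hG.D (F x)‖ * (ε₃ * S.lnorm 1 (hh n)) := mul_le_mul_of_nonneg_left hFdiff' h2
        _ = (‖hG.D (F x)‖ * ε₃) * S.lnorm 1 (hh n) := by ring
        _ ≤ ε / 2 * S.lnorm 1 (hh n) := mul_le_mul_of_nonneg_right h5 h3.le
    have hFxk : F x + k = F (x + hh n) := by rw [hk]; abel
    have hfinal : ‖G (F (x + hh n)) - G (F x) - hG.D (F x) (hF.D x (hh n))‖
        ≤ ε * S.lnorm 1 (hh n) := by
      have hsplit : G (F (x + hh n)) - G (F x) - hG.D (F x) (hF.D x (hh n))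
          = (G (F x + k) - G (F x) - hG.D (F x) k) + hG.D (F x) (k - hF.D x (hh n)) := by
        rw [map_sub, hFxk]
        abel
      rw [hsplit]
      calc ‖(G (F x + k) - G (F x) - hG.D (F x) k) + hG.D (F x) (k - hF.D x (hh n))‖
          ≤ ‖G (F x + k) - G (F x) - hG.D (F x) k‖ + ‖hG.D (F x) (k - hF.D x (hh n))‖ :=
            norm_add_le _ _
        _ ≤ ε / 2 * S.lnorm 1 (hh n) + ε / 2 * S.lnorm 1 (hh n) := add_le_add hAbound hBbound
        _ = ε * S.lnorm 1 (hh n) := by ring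
    have hb := hbad n
    rw [hΦ (x + hh n) hxhU, hΦ x hxU] at hb
    simp only [ContinuousLinearMap.comp_apply] at hb
    exact absurd hfinal (not_le.mpr hb)
  tan_level := by
    intro m x hx h hh
    have h1 := hF.tan_level m x hx h hh
    have h2 := hG.tan_level m (F x) ⟨hFV x hx.1, h1.1⟩ (hF.D x h) h1.2
    exact ⟨by rw [hΦ x hx.1]; exact h2.1, h2.2⟩
  tan_cont := by
    intro m x hx h hh ε hε
    have ht1 := hF.tan_level m x hx h hh
    obtain ⟨δ₁, hδ₁, h₁⟩ := hG.tan_cont m (F x) ⟨hFV x hx.1, ht1.1⟩ (hF.D x h) ht1.2 ε hε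
    obtain ⟨δ, hδ, h₂⟩ := hF.tan_cont m x hx h hh δ₁ hδ₁
    refine ⟨δ, hδ, fun y hy k hk hc1 hc2 => ?_⟩
    have hsum := h₂ y hy k hk hc1 hc2
    have hA : S'.lnorm (m + 1) (F y - F x) < δ₁ :=
      lt_of_le_of_lt (le_add_of_nonneg_right (S'.lnorm_nonneg _ _)) hsum
    have hB : S'.lnorm m (hF.D y k - hF.D x h) < δ₁ :=
      lt_of_le_of_lt (le_add_of_nonneg_left (S'.lnorm_nonneg _ _)) hsum
    have ht2 := hF.tan_level m y hy k hk
    have := h₁ (F y) ⟨hFV y hy.1, ht2.1⟩ (hF.D y k) ht2.2 hA hB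
    rw [hΦ x hx.1, hΦ y hy.1]
    simpa using this

end CompSection
/-- Chain rule for sc¹ maps between sc-smooth retracts.  Let `(O,E)`, `(O',E')`,
`(O'',E'')` be local sc-models, given by sc-smooth retractions `r, s, t` on open
sets `U, V, W`, and let `f : O → O'` and `g : O' → O''` be sc¹, i.e. `f ∘ r` and
`g ∘ s` are sc¹.  Then `g ∘ f` is sc¹ — `(g ∘ f) ∘ r` is sc¹ — and on
`TO = Tr(TU)` the tangent maps satisfy `T(g ∘ f) = (Tg) ∘ (Tf)`, where
`Tf = T(f ∘ r)|_{TO}`, `Tg = T(g ∘ s)|_{TO'}` and `T(g ∘ f) = T((g ∘ f) ∘ r)|_{TO}`. -/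
theorem sc1_comp_retracts
    {E E' E'' : Type*} [NormedAddCommGroup E] [NormedSpace ℝ E]
    [NormedAddCommGroup E'] [NormedSpace ℝ E']
    [NormedAddCommGroup E''] [NormedSpace ℝ E'']
    (S : ScBanach E) (S' : ScBanach E') (S'' : ScBanach E'')
    (U : Set E) (V : Set E') (W : Set E'')
    (hU : IsOpen U) (hV : IsOpen V) (hW : IsOpen W)
    (r : E → E) (s : E' → E') (t : E'' → E'')
    (hrU : Set.MapsTo r U U) (hsV : Set.MapsTo s V V) (htW : Set.MapsTo t W W)
    (hr : Sc1 S S U r) (hs : Sc1 S' S' V s) (ht : Sc1 S'' S'' W t)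
    (hretr : ∀ x ∈ U, r (r x) = r x) (hrets : ∀ x ∈ V, s (s x) = s x)
    (hrett : ∀ x ∈ W, t (t x) = t x)
    (O : Set E) (O' : Set E') (O'' : Set E'')
    (hrO : r '' U = O) (hsO : s '' V = O') (htO : t '' W = O'')
    (f : E → E') (g : E' → E'')
    (hfO : Set.MapsTo f O O') (hgO : Set.MapsTo g O' O'')
    (hf : Sc1 S S' U (f ∘ r)) (hg : Sc1 S' S'' V (g ∘ s)) :
    ∃ hgf : Sc1 S S'' U ((g ∘ f) ∘ r),
      ∀ p ∈ Tmap r hr.D '' Tset S U,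
        Tmap ((g ∘ f) ∘ r) hgf.D p = Tmap (g ∘ s) hg.D (Tmap (f ∘ r) hf.D p) := by

  -- points of `O'` are fixed by `s`
  have hO'fix : ∀ y ∈ O', s y = y := by
    intro y hy
    rw [← hsO] at hy
    obtain ⟨v, hv, rfl⟩ := hy
    exact hrets v hv
  have hO'V : O' ⊆ V := by
    rw [← hsO]
    rintro y ⟨v, hv, rfl⟩
    exact hsV hv
  have hrxO : ∀ x ∈ U, r x ∈ O := fun x hx => hrO ▸ ⟨x, hx, rfl⟩
  have hFV : ∀ x ∈ U, (f ∘ r) x ∈ V := fun x hx => hO'V (hfO (hrxO x hx))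
  have hΦ : ∀ x ∈ U, ((g ∘ f) ∘ r) x = (g ∘ s) ((f ∘ r) x) := by
    intro x hx
    simp only [Function.comp_apply]
    rw [hO'fix (f (r x)) (hfO (hrxO x hx))]
  refine ⟨sc1CompCongr S S' S'' hV hf hg hFV hΦ, ?_⟩
  rintro p ⟨q, hq, rfl⟩
  obtain ⟨hqU, hq1⟩ := hq
  have hrr : r (r q.1) = r q.1 := hretr q.1 hqU
  have hfrO' : f (r q.1) ∈ O' := hfO (hrxO q.1 hqU)
  have hDeq : (sc1CompCongr S S' S'' hV hf hg hFV hΦ).D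
      = fun x => (hg.D ((f ∘ r) x)).comp (hf.D x) := rfl
  simp only [Tmap, hDeq, Function.comp_apply, ContinuousLinearMap.comp_apply, hrr,
    hO'fix (f (r q.1)) hfrO']
end

section
/- Let β : ℝ → [0,∞) be smooth, compactly supported, with ∫ β(t)² dt = 1, and for s > 0 set f_s(t) = β(t + e^{1/s}) ∈ L²(ℝ), while f_s = 0 for s ≤ 0. Let π_s denote the L²-orthogonal projection onto the span of f_s (π_s = 0 for s ≤ 0). Then the set O = {(s, t·f_s) : (s,t) ∈ ℝ²} ⊆ ℝ ⊕ L²(ℝ) equals the image of the retraction r(s,u) = (s, π_s u), r ∘ r = r, and the map Z → O, (s,t) ↦ (s, t·f_s), where Z = {(s,t) ∈ ℝ² : t = 0 if s ≤ 0}, is a homeomorphism onto O (with the subspace topology). -/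
open MeasureTheory
open scoped RealInnerProductSpace

noncomputable section

/-- The sc-smooth retraction `r(s,u) = (s, π_s u)` on `ℝ ⊕ L²(ℝ)`, where `π_s`
is the orthogonal projection onto the span of `f_s`. -/
def retr (fs : ℝ → Lp ℝ 2 (volume : Measure ℝ)) :
    ℝ × Lp ℝ 2 (volume : Measure ℝ) → ℝ × Lp ℝ 2 (volume : Measure ℝ) :=
  fun p => (p.1, ⟪p.2, fs p.1⟫ • fs p.1)

/-- The retract `O = {(s, t·f_s) : (s,t) ∈ ℝ²}`. -/
def Oset (fs : ℝ → Lp ℝ 2 (volume : Measure ℝ)) :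
    Set (ℝ × Lp ℝ 2 (volume : Measure ℝ)) :=
  {p | ∃ s t : ℝ, p = (s, t • fs s)}

/-- The finite-dimensional model `Z = {(s,t) ∈ ℝ² : t = 0 if s ≤ 0}`. -/
def Zset : Set (ℝ × ℝ) := {z | z.1 ≤ 0 → z.2 = 0}

/-- Let `β : ℝ → [0,∞)` be smooth, compactly supported, with `∫ β² = 1`; for
`s > 0` let `f_s(t) = β(t + e^{1/s})` (a unit vector of `L²(ℝ)`), and `f_s = 0`
for `s ≤ 0`.  Then the set `O = {(s, t·f_s)}` is exactly the image of the
retraction `r(s,u) = (s, π_s u)`, `r ∘ r = r`, and `(s,t) ↦ (s, t·f_s)` is a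
homeomorphism from `Z = {(s,t) : t = 0 if s ≤ 0}` onto `O` (with its subspace
topology).  In particular `Z` carries the structure of an M-polyfold. -/
theorem retraction_onto_varying_dimension_retract
    (β : ℝ → ℝ) (hβsmooth : ContDiff ℝ (⊤ : ℕ∞) β) (hβsupp : HasCompactSupport β)
    (hβnonneg : ∀ t, 0 ≤ β t) (hβnorm : ∫ t : ℝ, (β t) ^ 2 = 1)
    (fs : ℝ → Lp ℝ 2 (volume : Measure ℝ))
    (hfs : ∀ s : ℝ, 0 < s →
      (fs s : ℝ → ℝ) =ᵐ[volume] fun t => β (t + Real.exp (1 / s)))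
    (hfs0 : ∀ s : ℝ, s ≤ 0 → fs s = 0) :
    Set.range (retr fs) = Oset fs ∧
    (∀ p, retr fs (retr fs p) = retr fs p) ∧
    ∃ Φ : Zset ≃ₜ (Oset fs), ∀ z : Zset,
      (Φ z : ℝ × Lp ℝ 2 (volume : Measure ℝ)) =
        ((z : ℝ × ℝ).1, (z : ℝ × ℝ).2 • fs (z : ℝ × ℝ).1) := by
  classical
  -- `⟪f_s, f_s⟫ = 1` for `s > 0`
  have hinner1 : ∀ s : ℝ, 0 < s → ⟪fs s, fs s⟫ = 1 := by
    intro s hs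
    rw [MeasureTheory.L2.inner_def]
    have h1 : (fun t => ⟪(fs s : ℝ → ℝ) t, (fs s : ℝ → ℝ) t⟫) =ᵐ[volume]
        (fun t => (β (t + Real.exp (1 / s))) ^ 2) := by
      filter_upwards [hfs s hs] with t ht
      simp only [RCLike.inner_apply, starRingEnd_apply, star_trivial, ht]
      ring
    rw [integral_congr_ae h1, integral_add_right_eq_self (fun t => (β t) ^ 2)]
    exact hβnorm
  have hnorm1 : ∀ s : ℝ, 0 < s → ‖fs s‖ = 1 := by
    intro s hs
    have h := hinner1 s hs
    rw [real_inner_self_eq_norm_sq] at h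
    nlinarith [norm_nonneg (fs s)]
  have hnormle : ∀ s : ℝ, ‖fs s‖ ≤ 1 := by
    intro s
    rcases le_or_gt s 0 with h | h
    · simp [hfs0 s h]
    · exact le_of_eq (hnorm1 s h)
  -- `retr` fixes points of `O`
  have hfix : ∀ s t : ℝ, retr fs (s, t • fs s) = (s, t • fs s) := by
    intro s t
    rcases le_or_gt s 0 with h | h
    · simp [retr, hfs0 s h]
    · simp only [retr]
      rw [real_inner_smul_left, hinner1 s h, mul_one]
  have hrange : Set.range (retr fs) = Oset fs := by
    ext p
    constructor
    · rintro ⟨q, rfl⟩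
      exact ⟨q.1, ⟪q.2, fs q.1⟫, rfl⟩
    · rintro ⟨s, t, rfl⟩
      exact ⟨(s, t • fs s), hfix s t⟩
  have hidem : ∀ p, retr fs (retr fs p) = retr fs p := by
    intro p
    have h : retr fs p = (p.1, ⟪p.2, fs p.1⟫ • fs p.1) := rfl
    rw [h, hfix]
  refine ⟨hrange, hidem, ?_⟩
  -- continuity of `s ↦ f_s` on `(0,∞)`
  have hβmem : MemLp β 2 (volume : Measure ℝ) :=
    hβsmooth.continuous.memLp_of_hasCompactSupport hβsupp
  set βL : Lp ℝ 2 (volume : Measure ℝ) := hβmem.toLp β with hβLdef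
  have hβLcoe : (βL : ℝ → ℝ) =ᵐ[volume] β := hβmem.coeFn_toLp
  let F : C(ℝ × ℝ, ℝ) := ⟨fun q => q.2 + q.1, by fun_prop⟩
  let κ : ℝ → C(ℝ, ℝ) := fun a => F.curry a
  have hκ : Continuous κ := (F.curry).continuous
  have hmp : ∀ a : ℝ, MeasurePreserving (κ a) volume volume := fun a =>
    measurePreserving_add_right volume a
  let T : ℝ → Lp ℝ 2 (volume : Measure ℝ) := fun a =>
    Lp.compMeasurePreserving (κ a) (hmp a) βL
  have hT : Continuous T :=
    Continuous.compMeasurePreservingLp continuous_const hκ hmp (by norm_num)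
  have hfsT : ∀ s : ℝ, 0 < s → fs s = T (Real.exp (1 / s)) := by
    intro s hs
    apply Lp.ext
    have h1 : (T (Real.exp (1 / s)) : ℝ → ℝ) =ᵐ[volume]
        (βL : ℝ → ℝ) ∘ (κ (Real.exp (1 / s))) :=
      Lp.coeFn_compMeasurePreserving βL (hmp _)
    have h2 : (βL : ℝ → ℝ) ∘ (κ (Real.exp (1 / s))) =ᵐ[volume]
        β ∘ (κ (Real.exp (1 / s))) :=
      (hmp _).quasiMeasurePreserving.ae_eq_comp hβLcoe
    have h3 : (fs s : ℝ → ℝ) =ᵐ[volume] β ∘ (κ (Real.exp (1 / s))) := hfs s hs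
    exact h3.trans (h2.symm.trans h1.symm)
  have hfscont : ∀ s : ℝ, 0 < s → ContinuousAt fs s := by
    intro s hs
    have hc : ContinuousAt (fun s' : ℝ => T (Real.exp (1 / s'))) s := by
      apply hT.continuousAt.comp
      apply Real.continuous_exp.continuousAt.comp
      exact continuousAt_const.div continuousAt_id (ne_of_gt hs)
    have hev : (fun s' : ℝ => T (Real.exp (1 / s'))) =ᶠ[nhds s] fs := by
      filter_upwards [eventually_gt_nhds hs] with x hx
      exact (hfsT x hx).symm
    exact hc.congr hev
  -- continuity of the forward map on `Z`
  have hcontF : ContinuousOn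
      (fun z : ℝ × ℝ => ((z.1, z.2 • fs z.1) : ℝ × Lp ℝ 2 (volume : Measure ℝ)))
      Zset := by
    intro z hz
    refine ContinuousWithinAt.prodMk continuous_fst.continuousWithinAt ?_
    rcases lt_or_ge 0 z.1 with h | h
    · exact (ContinuousAt.smul continuous_snd.continuousAt
        ((hfscont z.1 h).comp continuous_fst.continuousAt)).continuousWithinAt
    · have hz2 : z.2 = 0 := hz h
      show Filter.Tendsto (fun w : ℝ × ℝ => w.2 • fs w.1)
        (nhdsWithin z Zset) (nhds (z.2 • fs z.1))
      rw [hz2, zero_smul]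
      apply squeeze_zero_norm (a := fun w : ℝ × ℝ => ‖w.2‖)
      · intro w
        rw [norm_smul]
        exact mul_le_of_le_one_right (norm_nonneg _) (hnormle w.1)
      · have h2 : Filter.Tendsto (fun w : ℝ × ℝ => ‖w.2‖)
            (nhdsWithin z Zset) (nhds ‖z.2‖) :=
          (continuous_norm.comp continuous_snd).continuousWithinAt
        rwa [hz2, norm_zero] at h2
  -- continuity of the inverse map on `O`
  have hcontG : ContinuousOn
      (fun p : ℝ × Lp ℝ 2 (volume : Measure ℝ) => ((p.1, ⟪p.2, fs p.1⟫) : ℝ × ℝ))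
      (Oset fs) := by
    intro p hp
    refine ContinuousWithinAt.prodMk continuous_fst.continuousWithinAt ?_
    rcases lt_or_ge 0 p.1 with h | h
    · exact (ContinuousAt.inner continuous_snd.continuousAt
        ((hfscont p.1 h).comp continuous_fst.continuousAt)).continuousWithinAt
    · obtain ⟨s, t, hpst⟩ := hp
      have hp1 : p.1 = s := by rw [hpst]
      have hp2 : p.2 = 0 := by
        rw [hpst]
        simp [hfs0 s (hp1 ▸ h)]
      show Filter.Tendsto (fun q : ℝ × Lp ℝ 2 (volume : Measure ℝ) => ⟪q.2, fs q.1⟫)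
        (nhdsWithin p (Oset fs)) (nhds ⟪p.2, fs p.1⟫)
      rw [show ⟪p.2, fs p.1⟫ = (0 : ℝ) by rw [hp2, inner_zero_left]]
      apply squeeze_zero_norm (a := fun q : ℝ × Lp ℝ 2 (volume : Measure ℝ) => ‖q.2‖)
      · intro q
        calc ‖⟪q.2, fs q.1⟫‖ = |⟪q.2, fs q.1⟫| := rfl
          _ ≤ ‖q.2‖ * ‖fs q.1‖ := abs_real_inner_le_norm _ _
          _ ≤ ‖q.2‖ := mul_le_of_le_one_right (norm_nonneg _) (hnormle q.1)
      · have h2 : Filter.Tendsto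
            (fun q : ℝ × Lp ℝ 2 (volume : Measure ℝ) => ‖q.2‖)
            (nhdsWithin p (Oset fs)) (nhds ‖p.2‖) :=
          (continuous_norm.comp continuous_snd).continuousWithinAt
        rwa [hp2, norm_zero] at h2
  -- the bijection
  let e : Zset ≃ Oset fs :=
  { toFun := fun z => ⟨((z : ℝ × ℝ).1, (z : ℝ × ℝ).2 • fs (z : ℝ × ℝ).1),
      ⟨(z : ℝ × ℝ).1, (z : ℝ × ℝ).2, rfl⟩⟩
    invFun := fun p => ⟨((p : ℝ × Lp ℝ 2 (volume : Measure ℝ)).1,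
      ⟪(p : ℝ × Lp ℝ 2 (volume : Measure ℝ)).2,
        fs (p : ℝ × Lp ℝ 2 (volume : Measure ℝ)).1⟫),
      fun h => by rw [hfs0 _ h, inner_zero_right]⟩
    left_inv := by
      rintro ⟨⟨s, t⟩, hz⟩
      apply Subtype.ext
      show ((s, ⟪t • fs s, fs s⟫) : ℝ × ℝ) = (s, t)
      have ht : ⟪t • fs s, fs s⟫ = t := by
        rcases lt_or_ge 0 s with h | h
        · rw [real_inner_smul_left, hinner1 s h, mul_one]
        · have ht0 : t = 0 := hz h
          rw [ht0, hfs0 s h]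
          simp
      rw [ht]
    right_inv := by
      rintro ⟨p, hp⟩
      apply Subtype.ext
      obtain ⟨s, t, hpst⟩ := hp
      show retr fs p = p
      rw [hpst, hfix] }
  have hc1 : Continuous fun z : Zset =>
      (((z : ℝ × ℝ).1, (z : ℝ × ℝ).2 • fs (z : ℝ × ℝ).1) :
        ℝ × Lp ℝ 2 (volume : Measure ℝ)) :=
    hcontF.restrict
  have hc2 : Continuous fun p : Oset fs =>
      (((p : ℝ × Lp ℝ 2 (volume : Measure ℝ)).1,
        ⟪(p : ℝ × Lp ℝ 2 (volume : Measure ℝ)).2,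
          fs (p : ℝ × Lp ℝ 2 (volume : Measure ℝ)).1⟫) : ℝ × ℝ) :=
    hcontG.restrict
  exact ⟨{ e with
      continuous_toFun := hc1.subtype_mk _
      continuous_invFun := hc2.subtype_mk _ }, fun z => rfl⟩

end
end
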